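/- arXiv:1110.3556 — 3 statements merged into one kernel-verified Lean document; each statement's English description precedes it below -/
import Mathlib

section
/- Fix λ > 0, n ≥ k ≥ 1, an m×n matrix Y and an m×p matrix X, and let (S⁽ʲ⁾, V⁽ʲ⁾), j = 1, 2, …, be a sequence in ℝ^{p×k} × 𝕆^{n×k} such that for every j, S⁽ʲ⁺¹⁾ globally minimizes S ↦ ½‖Y V⁽ʲ⁾ − XS‖²_F + λ‖S‖_{2,1} over ℝ^{p×k}, and V⁽ʲ⁺¹⁾ globally maximizes V ↦ tr((Y′XS⁽ʲ⁺¹⁾)′V) over 𝕆^{n×k}. Suppose additionally that for every (S, V) ∈ ℝ^{p×k} × 𝕆^{n×k} that is not a local minimum of F, one has F(S, V) > min over S̃ ∈ ℝ^{p×k} of F(S̃, V). Then any accumulation point of the sequence (S⁽ʲ⁾, V⁽ʲ⁾) is a local minimum of F, and F(S⁽ʲ⁾, V⁽ʲ⁾) converges monotonically (nonincreasing) to F(S*, V*) for some local minimizer (S*, V*). -/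
/-! For orthonormal `V`, `F(S, V)` equals `½‖YV − XS‖²_F + λ‖S‖_{2,1}` up to a term independent
of `S`, and also `½(‖Y‖²_F + ‖XS‖²_F) − tr((Y′XS)′V) + λ‖S‖_{2,1}`. So the `S`-step minimizes
`F(·, V⁽ʲ⁾)` and the `V`-step minimizes `F(S⁽ʲ⁺¹⁾, ·)` over `𝕆^{n×k}`, whence
`F(S⁽ʲ⁺¹⁾, V⁽ʲ⁺¹⁾) ≤ F(S̃, V⁽ʲ⁾)` for every `S̃`. The values decrease, and passing to the limit in
this inequality along a convergent subsequence shows that an accumulation point `(S*, V*)`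
minimizes `F(·, V*)`; by the hypothesis on non-minima it is a local minimum. The iterates stay in
a compact set (`λ‖S⁽ʲ⁾‖_{2,1} ≤ F(S⁽⁰⁾, V⁽⁰⁾)` and the entries of `V⁽ʲ⁾` lie in `[-1, 1]`), so an
accumulation point exists, and by monotonicity the whole value sequence converges to its value. -/

open Matrix Finset Filter Topology

noncomputable section

/-- Squared Frobenius norm of a matrix. -/
def frobSq {m n : ℕ} (M : Matrix (Fin m) (Fin n) ℝ) : ℝ := ∑ i, ∑ j, (M i j) ^ 2

/-- Frobenius norm. -/
def frobNorm {m n : ℕ} (M : Matrix (Fin m) (Fin n) ℝ) : ℝ := Real.sqrt (frobSq M)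

/-- Euclidean norm of a vector. -/
def eNorm {n : ℕ} (v : Fin n → ℝ) : ℝ := Real.sqrt (∑ j, (v j) ^ 2)

/-- Sum of the Euclidean norms of the rows, `‖S‖_{2,1}`. -/
def norm21 {p n : ℕ} (B : Matrix (Fin p) (Fin n) ℝ) : ℝ := ∑ i, eNorm (B i)

/-- `V` has orthonormal columns: `V ∈ 𝕆^{n×k}`. -/
def IsOrthCol {n k : ℕ} (V : Matrix (Fin n) (Fin k) ℝ) : Prop := Vᵀ * V = 1

/-- The objective `F(S, V) = ½‖Y − XSV′‖²_F + λ‖S‖_{2,1}`. -/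
def Fobj {m n p k : ℕ} (Y : Matrix (Fin m) (Fin n) ℝ) (X : Matrix (Fin m) (Fin p) ℝ)
    (lam : ℝ) (S : Matrix (Fin p) (Fin k) ℝ) (V : Matrix (Fin n) (Fin k) ℝ) : ℝ :=
  (1 / 2) * frobSq (Y - X * S * Vᵀ) + lam * norm21 S


/-- `(S, V)` is a local minimum of `F` on `ℝ^{p×k} × 𝕆^{n×k}`. -/
def IsLocMinF {m n p k : ℕ} (Y : Matrix (Fin m) (Fin n) ℝ) (X : Matrix (Fin m) (Fin p) ℝ)
    (lam : ℝ) (S : Matrix (Fin p) (Fin k) ℝ) (V : Matrix (Fin n) (Fin k) ℝ) : Prop :=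
  IsOrthCol V ∧ ∃ ε : ℝ, 0 < ε ∧ ∀ (S' : Matrix (Fin p) (Fin k) ℝ)
    (V' : Matrix (Fin n) (Fin k) ℝ), IsOrthCol V' →
      frobNorm (S' - S) + frobNorm (V' - V) < ε → Fobj Y X lam S V ≤ Fobj Y X lam S' V'

section AlternatingDescent

variable {α β : Type*} [TopologicalSpace α] [TopologicalSpace β] {f : α → β → ℝ}
  {x : ℕ → α} {y : ℕ → β}

theorem tendsto_and_le_of_alternating_descent (hf : Continuous (Function.uncurry f))
    (hdesc : ∀ j a', f (x (j + 1)) (y (j + 1)) ≤ f a' (y j)) {φ : ℕ → ℕ} (hφ : StrictMono φ)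
    {a : α} {b : β} (hlim : Tendsto (fun l => (x (φ l), y (φ l))) atTop (𝓝 (a, b))) :
    Tendsto (fun j => f (x j) (y j)) atTop (𝓝 (f a b)) ∧ ∀ a', f a b ≤ f a' b := by
  have hanti : Antitone fun j => f (x j) (y j) := antitone_nat_of_succ_le fun j => hdesc j (x j)
  have htend : Tendsto (fun j => f (x j) (y j)) atTop (𝓝 (f a b)) :=
    (tendsto_iff_tendsto_subseq_of_antitone hanti hφ.tendsto_atTop).2
      ((hf.tendsto (a, b)).comp hlim)
  refine ⟨htend, fun a' => ?_⟩
  have hnext : Tendsto (fun l => f (x (φ l + 1)) (y (φ l + 1))) atTop (𝓝 (f a b)) :=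
    htend.comp ((tendsto_add_atTop_nat 1).comp hφ.tendsto_atTop)
  have hfixed : Tendsto (fun l => f a' (y (φ l))) atTop (𝓝 (f a' b)) :=
    ((hf.comp (continuous_const.prodMk continuous_id)).tendsto b).comp
      ((continuous_snd.tendsto (a, b)).comp hlim)
  exact le_of_tendsto_of_tendsto' hnext hfixed fun l => hdesc (φ l) a'

end AlternatingDescent

theorem Matrix.isCompact_setOf_abs_le {m n : Type*} [Finite m] [Finite n] (C : ℝ) :
    IsCompact {M : Matrix m n ℝ | ∀ i j, |M i j| ≤ C} := by
  have hpi : {M : Matrix m n ℝ | ∀ i j, |M i j| ≤ C} =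
      Set.univ.pi fun _ => Set.univ.pi fun _ => Metric.closedBall 0 C := by
    ext M
    change (∀ i j, _) ↔ ∀ i ∈ Set.univ, ∀ j ∈ Set.univ, M i j ∈ Metric.closedBall (0 : ℝ) C
    simp
  rw [hpi]
  exact isCompact_univ_pi fun _ => isCompact_univ_pi fun _ => isCompact_closedBall 0 C

instance Matrix.firstCountableTopology {m n R : Type*} [Countable m] [Countable n]
    [TopologicalSpace R] [FirstCountableTopology R] : FirstCountableTopology (Matrix m n R) :=
  inferInstanceAs (FirstCountableTopology (m → n → R))

theorem frobSq_eq_trace {m n : ℕ} (M : Matrix (Fin m) (Fin n) ℝ) :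
    frobSq M = (Mᵀ * M).trace := by
  simp only [frobSq, trace, Matrix.diag, mul_apply, transpose_apply, sq]
  exact Finset.sum_comm

theorem frobSq_sub {m n : ℕ} (A B : Matrix (Fin m) (Fin n) ℝ) :
    frobSq (A - B) = frobSq A - 2 * (Aᵀ * B).trace + frobSq B := by
  have hsymm : (Bᵀ * A).trace = (Aᵀ * B).trace := by
    rw [← trace_transpose, transpose_mul, transpose_transpose]
  simp only [frobSq_eq_trace, transpose_sub, Matrix.sub_mul, Matrix.mul_sub, trace_sub, hsymm]
  ring

theorem frobSq_mul_transpose_of_isOrthCol {m n k : ℕ} (M : Matrix (Fin m) (Fin k) ℝ)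
    {V : Matrix (Fin n) (Fin k) ℝ} (hV : IsOrthCol V) : frobSq (M * Vᵀ) = frobSq M := by
  rw [frobSq_eq_trace, frobSq_eq_trace, transpose_mul, transpose_transpose, Matrix.mul_assoc,
    trace_mul_comm, Matrix.mul_assoc, Matrix.mul_assoc, hV, Matrix.mul_one]

theorem continuous_frobSq {m n : ℕ} : Continuous (frobSq : Matrix (Fin m) (Fin n) ℝ → ℝ) := by
  unfold frobSq; fun_prop

theorem continuous_norm21 {p n : ℕ} : Continuous (norm21 : Matrix (Fin p) (Fin n) ℝ → ℝ) := by
  unfold norm21 eNorm; fun_prop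

theorem abs_le_norm21 {p n : ℕ} (S : Matrix (Fin p) (Fin n) ℝ) (i : Fin p) (t : Fin n) :
    |S i t| ≤ norm21 S := calc
  |S i t| = √((S i t) ^ 2) := (Real.sqrt_sq_eq_abs _).symm
  _ ≤ eNorm (S i) := Real.sqrt_le_sqrt (Finset.single_le_sum (f := fun t' => S i t' ^ 2)
      (fun _ _ => sq_nonneg _) (Finset.mem_univ t))
  _ ≤ norm21 S := Finset.single_le_sum (f := fun i' => eNorm (S i'))
      (fun _ _ => Real.sqrt_nonneg _) (Finset.mem_univ i)

theorem isClosed_setOf_isOrthCol {n k : ℕ} :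
    IsClosed {V : Matrix (Fin n) (Fin k) ℝ | IsOrthCol V} :=
  isClosed_eq (by fun_prop) continuous_const

theorem abs_le_one_of_isOrthCol {n k : ℕ} {V : Matrix (Fin n) (Fin k) ℝ} (hV : IsOrthCol V)
    (i : Fin n) (t : Fin k) : |V i t| ≤ 1 := by
  have hcol : ∑ i', V i' t ^ 2 = 1 := by
    simpa [sq, mul_apply] using congrFun (congrFun hV t) t
  rw [← sq_le_one_iff_abs_le_one, ← hcol]
  exact Finset.single_le_sum (f := fun i' => V i' t ^ 2) (fun _ _ => sq_nonneg _)
    (Finset.mem_univ i)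

section Objective

variable {m n p k : ℕ} (Y : Matrix (Fin m) (Fin n) ℝ) (X : Matrix (Fin m) (Fin p) ℝ) (lam : ℝ)

theorem continuous_Fobj : Continuous (Function.uncurry (Fobj (k := k) Y X lam)) := by
  unfold Function.uncurry Fobj
  have := continuous_frobSq (m := m) (n := n)
  have := continuous_norm21 (p := p) (n := k)
  fun_prop

theorem mul_norm21_le_Fobj (S : Matrix (Fin p) (Fin k) ℝ)
    (V : Matrix (Fin n) (Fin k) ℝ) : lam * norm21 S ≤ Fobj Y X lam S V := by
  have : 0 ≤ frobSq (Y - X * S * Vᵀ) := by unfold frobSq; positivity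
  unfold Fobj
  linarith

variable {S : Matrix (Fin p) (Fin k) ℝ} {V : Matrix (Fin n) (Fin k) ℝ}

theorem Fobj_eq_sub_trace (hV : IsOrthCol V) :
    Fobj Y X lam S V = (1 / 2) * (frobSq Y + frobSq (X * S))
      - ((Yᵀ * X * S)ᵀ * V).trace + lam * norm21 S := by
  have htr : (Yᵀ * (X * S * Vᵀ)).trace = ((Yᵀ * X * S)ᵀ * V).trace := by
    rw [← Matrix.mul_assoc, ← Matrix.mul_assoc, ← trace_transpose, transpose_mul,
      transpose_transpose, trace_mul_comm]
  rw [Fobj, frobSq_sub, frobSq_mul_transpose_of_isOrthCol _ hV, htr]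
  ring

theorem Fobj_eq_lasso_add (hV : IsOrthCol V) :
    Fobj Y X lam S V = (1 / 2) * frobSq (Y * V - X * S) + lam * norm21 S
      + (1 / 2) * (frobSq Y - frobSq (Y * V)) := by
  have htr : ((Y * V)ᵀ * (X * S)).trace = ((Yᵀ * X * S)ᵀ * V).trace := by
    rw [← trace_transpose]
    simp only [transpose_mul, transpose_transpose, Matrix.mul_assoc]
  rw [Fobj_eq_sub_trace Y X lam hV, frobSq_sub, htr]
  ring

theorem Fobj_le_of_lasso_le (hV : IsOrthCol V) {S' : Matrix (Fin p) (Fin k) ℝ}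
    (h : (1 / 2) * frobSq (Y * V - X * S) + lam * norm21 S ≤
      (1 / 2) * frobSq (Y * V - X * S') + lam * norm21 S') :
    Fobj Y X lam S V ≤ Fobj Y X lam S' V := by
  rw [Fobj_eq_lasso_add Y X lam hV, Fobj_eq_lasso_add Y X lam hV]
  linarith

theorem Fobj_le_of_trace_le {V' : Matrix (Fin n) (Fin k) ℝ} (hV : IsOrthCol V)
    (hV' : IsOrthCol V') (h : ((Yᵀ * X * S)ᵀ * V).trace ≤ ((Yᵀ * X * S)ᵀ * V').trace) :
    Fobj Y X lam S V' ≤ Fobj Y X lam S V := by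
  rw [Fobj_eq_sub_trace Y X lam hV, Fobj_eq_sub_trace Y X lam hV']
  linarith

end Objective

theorem stmt6_general {m n p k : ℕ} (lam : ℝ) (hlam : 0 < lam)
    (Y : Matrix (Fin m) (Fin n) ℝ) (X : Matrix (Fin m) (Fin p) ℝ)
    (S : ℕ → Matrix (Fin p) (Fin k) ℝ) (V : ℕ → Matrix (Fin n) (Fin k) ℝ)
    (hV : ∀ j, IsOrthCol (V j))
    (hSmin : ∀ j, ∀ S' : Matrix (Fin p) (Fin k) ℝ,
      (1 / 2) * frobSq (Y * V j - X * S (j + 1)) + lam * norm21 (S (j + 1)) ≤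
        (1 / 2) * frobSq (Y * V j - X * S') + lam * norm21 S')
    (hVmax : ∀ j, ∀ V' : Matrix (Fin n) (Fin k) ℝ, IsOrthCol V' →
      ((Yᵀ * X * S (j + 1))ᵀ * V').trace ≤ ((Yᵀ * X * S (j + 1))ᵀ * V (j + 1)).trace)
    -- every point of `ℝ^{p×k} × 𝕆^{n×k}` outside the local minimum set of `F` satisfies
    -- `F(S, V) > min_{S̃} F(S̃, V)`
    (hF : ∀ (S₀ : Matrix (Fin p) (Fin k) ℝ) (V₀ : Matrix (Fin n) (Fin k) ℝ), IsOrthCol V₀ →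
      ¬ IsLocMinF Y X lam S₀ V₀ →
      ∃ S' : Matrix (Fin p) (Fin k) ℝ, Fobj Y X lam S' V₀ < Fobj Y X lam S₀ V₀) :
    (∀ (Sstar : Matrix (Fin p) (Fin k) ℝ) (Vstar : Matrix (Fin n) (Fin k) ℝ),
      (∃ φ : ℕ → ℕ, StrictMono φ ∧
        Tendsto (fun l => (S (φ l), V (φ l))) atTop (𝓝 (Sstar, Vstar))) →
      IsLocMinF Y X lam Sstar Vstar) ∧
    Antitone (fun j => Fobj Y X lam (S j) (V j)) ∧
    ∃ (Sstar : Matrix (Fin p) (Fin k) ℝ) (Vstar : Matrix (Fin n) (Fin k) ℝ),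
      IsLocMinF Y X lam Sstar Vstar ∧
      Tendsto (fun j => Fobj Y X lam (S j) (V j)) atTop (𝓝 (Fobj Y X lam Sstar Vstar)) := by
  have hdesc : ∀ j S', Fobj Y X lam (S (j + 1)) (V (j + 1)) ≤ Fobj Y X lam S' (V j) :=
    fun j S' => (Fobj_le_of_trace_le Y X lam (hV j) (hV (j + 1)) (hVmax j (V j) (hV j))).trans
      (Fobj_le_of_lasso_le Y X lam (hV j) (hSmin j S'))
  have hanti : Antitone fun j => Fobj Y X lam (S j) (V j) :=
    antitone_nat_of_succ_le fun j => hdesc j (S j)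
  have hacc : ∀ Sstar Vstar, (∃ φ : ℕ → ℕ, StrictMono φ ∧
      Tendsto (fun l => (S (φ l), V (φ l))) atTop (𝓝 (Sstar, Vstar))) →
      IsLocMinF Y X lam Sstar Vstar ∧
        Tendsto (fun j => Fobj Y X lam (S j) (V j)) atTop (𝓝 (Fobj Y X lam Sstar Vstar)) := by
    rintro Sstar Vstar ⟨φ, hφ, hlim⟩
    obtain ⟨htend, hmin⟩ :=
      tendsto_and_le_of_alternating_descent (continuous_Fobj Y X lam) hdesc hφ hlim
    have horth : IsOrthCol Vstar := isClosed_setOf_isOrthCol.mem_of_tendsto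
      ((continuous_snd.tendsto _).comp hlim) (Eventually.of_forall fun l => hV (φ l))
    refine ⟨?_, htend⟩
    by_contra hnot
    obtain ⟨S', hS'⟩ := hF Sstar Vstar horth hnot
    exact (hmin S').not_gt hS'
  have hbounded : ∀ j, (S j, V j) ∈ {S' : Matrix (Fin p) (Fin k) ℝ |
      ∀ i t, |S' i t| ≤ Fobj Y X lam (S 0) (V 0) / lam} ×ˢ
      {V' : Matrix (Fin n) (Fin k) ℝ | ∀ i t, |V' i t| ≤ 1} := fun j =>
    ⟨fun i t => (abs_le_norm21 _ i t).trans <| (le_div_iff₀' hlam).2 <|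
      (mul_norm21_le_Fobj Y X lam _ _).trans (hanti (Nat.zero_le j)),
      abs_le_one_of_isOrthCol (hV j)⟩
  obtain ⟨q, -, φ, hφ, hlim⟩ := ((Matrix.isCompact_setOf_abs_le _).prod
    (Matrix.isCompact_setOf_abs_le _)).tendsto_subseq hbounded
  exact ⟨fun Sstar Vstar h => (hacc Sstar Vstar h).1, hanti, q.1, q.2, hacc q.1 q.2 ⟨φ, hφ, hlim⟩⟩

/-- Theorem 6(ii): convergence of the alternating RCGL algorithm to local minima. -/
theorem stmt6 {m n p k : ℕ} (lam : ℝ) (hlam : 0 < lam) (hk : 1 ≤ k) (hkn : k ≤ n)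
    (Y : Matrix (Fin m) (Fin n) ℝ) (X : Matrix (Fin m) (Fin p) ℝ)
    (S : ℕ → Matrix (Fin p) (Fin k) ℝ) (V : ℕ → Matrix (Fin n) (Fin k) ℝ)
    (hV : ∀ j, IsOrthCol (V j))
    (hSmin : ∀ j, ∀ S' : Matrix (Fin p) (Fin k) ℝ,
      (1 / 2) * frobSq (Y * V j - X * S (j + 1)) + lam * norm21 (S (j + 1)) ≤
        (1 / 2) * frobSq (Y * V j - X * S') + lam * norm21 S')
    (hVmax : ∀ j, ∀ V' : Matrix (Fin n) (Fin k) ℝ, IsOrthCol V' →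
      ((Yᵀ * X * S (j + 1))ᵀ * V').trace ≤ ((Yᵀ * X * S (j + 1))ᵀ * V (j + 1)).trace)
    -- every point of `ℝ^{p×k} × 𝕆^{n×k}` outside the local minimum set of `F` satisfies
    -- `F(S, V) > min_{S̃} F(S̃, V)`
    (hF : ∀ (S₀ : Matrix (Fin p) (Fin k) ℝ) (V₀ : Matrix (Fin n) (Fin k) ℝ), IsOrthCol V₀ →
      ¬ IsLocMinF Y X lam S₀ V₀ →
      ∃ S' : Matrix (Fin p) (Fin k) ℝ, Fobj Y X lam S' V₀ < Fobj Y X lam S₀ V₀) :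
    (∀ (Sstar : Matrix (Fin p) (Fin k) ℝ) (Vstar : Matrix (Fin n) (Fin k) ℝ),
      (∃ φ : ℕ → ℕ, StrictMono φ ∧
        Tendsto (fun l => (S (φ l), V (φ l))) atTop (𝓝 (Sstar, Vstar))) →
      IsLocMinF Y X lam Sstar Vstar) ∧
    Antitone (fun j => Fobj Y X lam (S j) (V j)) ∧
    ∃ (Sstar : Matrix (Fin p) (Fin k) ℝ) (Vstar : Matrix (Fin n) (Fin k) ℝ),
      IsLocMinF Y X lam Sstar Vstar ∧
      Tendsto (fun j => Fobj Y X lam (S j) (V j)) atTop (𝓝 (Fobj Y X lam Sstar Vstar)) :=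
  stmt6_general lam hlam Y X S V hV hSmin hVmax hF

end
end

section
/- Let V be a nonnegative real-valued random variable and let μ ≥ 0, δ > 0 be such that P{V ≥ μ + t} ≤ exp(−t²/2) for all t > 0. Set ν = μ + δ. Then E[(V² − ν²)₊] ≤ 2(1 + μ/δ) exp(−δ²/2). -/
/-!
Put `ν = μ₀ + δ` and `c = δ / (2ν)`. If `(V² − ν²)₊ > t > 0` then `V ≥ s := √(ν² + t) > μ₀`, and
the identity `ν((s − μ₀)² − δ²) − δ(s² − ν²) = μ₀(s − ν)²` turns the hypothesis at `s − μ₀` into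
the exponential tail `P{(V² − ν²)₊ > t} ≤ exp(−δ²/2) exp(−c t)`. The layer-cake formula then bounds
the expectation by `exp(−δ²/2) / c = 2(1 + μ₀/δ) exp(−δ²/2)`.
-/

open MeasureTheory Set Real

theorem integral_le_div_of_meas_lt_le_exp {α : Type*} [MeasurableSpace α] {μ : Measure α}
    {f : α → ℝ} (hf_nn : 0 ≤ᵐ[μ] f) (hf : AEMeasurable f μ) {A c : ℝ} (hA : 0 ≤ A) (hc : 0 < c)
    (htail : ∀ t > 0, μ {a | t < f a} ≤ ENNReal.ofReal (A * exp (-c * t))) :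
    ∫ a, f a ∂μ ≤ A / c := by
  have hexp : ∫ t in Ioi (0 : ℝ), A * exp (-c * t) = A / c := by
    rw [integral_const_mul, integral_exp_mul_Ioi (neg_lt_zero.2 hc), mul_zero, exp_zero]
    ring
  have hint : IntegrableOn (fun t => A * exp (-c * t)) (Ioi 0) :=
    (exp_neg_integrableOn_Ioi 0 hc).const_mul A
  rw [integral_eq_lintegral_of_nonneg_ae hf_nn hf.aestronglyMeasurable]
  refine ENNReal.toReal_le_of_le_ofReal (div_nonneg hA hc.le) ?_
  calc ∫⁻ a, ENNReal.ofReal (f a) ∂μ = ∫⁻ t in Ioi 0, μ {a | t < f a} :=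
        lintegral_eq_lintegral_meas_lt μ hf_nn hf
    _ ≤ ∫⁻ t in Ioi 0, ENNReal.ofReal (A * exp (-c * t)) :=
        setLIntegral_mono (by fun_prop) htail
    _ = ENNReal.ofReal (A / c) := by
        rw [← hexp, ofReal_integral_eq_lintegral_ofReal hint
          (ae_of_all _ fun t => by positivity)]

theorem neg_sub_sq_div_two_le {μ₀ δ : ℝ} (hμ₀ : 0 ≤ μ₀) (hδ : 0 < δ) (s : ℝ) :
    -(s - μ₀) ^ 2 / 2 ≤ -δ ^ 2 / 2 + -(δ / (2 * (μ₀ + δ))) * (s ^ 2 - (μ₀ + δ) ^ 2) := by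
  have key : δ * (s ^ 2 - (μ₀ + δ) ^ 2) + μ₀ * (s - (μ₀ + δ)) ^ 2
      = (μ₀ + δ) * ((s - μ₀) ^ 2 - δ ^ 2) := by ring
  have h : δ / (2 * (μ₀ + δ)) * (s ^ 2 - (μ₀ + δ) ^ 2) ≤ ((s - μ₀) ^ 2 - δ ^ 2) / 2 := by
    rw [div_mul_eq_mul_div, div_le_div_iff₀ (by positivity) two_pos]
    linarith [mul_nonneg hμ₀ (sq_nonneg (s - (μ₀ + δ)))]
  linarith

theorem meas_lt_max_sq_sub_sq_le {Ω : Type*} [MeasurableSpace Ω] {μ : Measure Ω} {V : Ω → ℝ}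
    (hV_nn : ∀ ω, 0 ≤ V ω) {μ₀ δ : ℝ} (hμ₀ : 0 ≤ μ₀) (hδ : 0 < δ)
    (htail : ∀ t : ℝ, 0 < t → μ {ω | μ₀ + t ≤ V ω} ≤ ENNReal.ofReal (exp (-t ^ 2 / 2)))
    {t : ℝ} (ht : 0 < t) :
    μ {ω | t < max (V ω ^ 2 - (μ₀ + δ) ^ 2) 0} ≤
      ENNReal.ofReal (exp (-δ ^ 2 / 2) * exp (-(δ / (2 * (μ₀ + δ))) * t)) := by
  set s := √((μ₀ + δ) ^ 2 + t) with hs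
  have hs_sq : s ^ 2 = (μ₀ + δ) ^ 2 + t := sq_sqrt (by positivity)
  have hμ₀s : μ₀ < s := by
    rw [hs, lt_sqrt hμ₀]
    nlinarith
  have hsub : {ω | t < max (V ω ^ 2 - (μ₀ + δ) ^ 2) 0} ⊆ {ω | μ₀ + (s - μ₀) ≤ V ω} := by
    intro ω hω
    simp only [mem_ofPred_eq, lt_max_iff, add_sub_cancel] at hω ⊢
    rw [hs, sqrt_le_left (hV_nn ω)]
    rcases hω with h | h <;> linarith
  calc μ {ω | t < max (V ω ^ 2 - (μ₀ + δ) ^ 2) 0}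
      ≤ ENNReal.ofReal (exp (-(s - μ₀) ^ 2 / 2)) :=
        (measure_mono hsub).trans (htail _ (by linarith))
    _ ≤ _ := by
      rw [← exp_add]
      gcongr
      simpa only [hs_sq, add_sub_cancel_left] using neg_sub_sq_div_two_le hμ₀ hδ s

theorem stmt9_general {Ω : Type} [MeasurableSpace Ω] (μ : Measure Ω)
    (V : Ω → ℝ) (hVmeas : Measurable V) (hVnonneg : ∀ ω, 0 ≤ V ω)
    (μ₀ δ : ℝ) (hμ₀ : 0 ≤ μ₀) (hδ : 0 < δ)
    (htail : ∀ t : ℝ, 0 < t →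
      μ {ω | μ₀ + t ≤ V ω} ≤ ENNReal.ofReal (Real.exp (-t ^ 2 / 2))) :
    ∫ ω, max ((V ω) ^ 2 - (μ₀ + δ) ^ 2) 0 ∂μ ≤
      2 * (1 + μ₀ / δ) * Real.exp (-δ ^ 2 / 2) := by
  refine (integral_le_div_of_meas_lt_le_exp (ae_of_all _ fun ω => le_max_right _ _)
    (by fun_prop) (exp_pos _).le (by positivity)
    fun t ht => meas_lt_max_sq_sub_sq_le hVnonneg hμ₀ hδ htail ht).trans_eq ?_
  field_simp
  ring

/-- Tail-to-moment bound: if `P{V ≥ μ₀ + t} ≤ exp(−t²/2)` for all `t > 0` and `ν = μ₀ + δ`,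
then `E[(V² − ν²)₊] ≤ 2(1 + μ₀/δ) exp(−δ²/2)`. -/
theorem stmt9 {Ω : Type} [MeasurableSpace Ω] (μ : Measure Ω) [IsProbabilityMeasure μ]
    (V : Ω → ℝ) (hVmeas : Measurable V) (hVnonneg : ∀ ω, 0 ≤ V ω)
    (μ₀ δ : ℝ) (hμ₀ : 0 ≤ μ₀) (hδ : 0 < δ)
    (htail : ∀ t : ℝ, 0 < t →
      μ {ω | μ₀ + t ≤ V ω} ≤ ENNReal.ofReal (Real.exp (-t ^ 2 / 2))) :
    ∫ ω, max ((V ω) ^ 2 - (μ₀ + δ) ^ 2) 0 ∂μ ≤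
      2 * (1 + μ₀ / δ) * Real.exp (-δ ^ 2 / 2) :=
  stmt9_general μ V hVmeas hVnonneg μ₀ δ hμ₀ hδ htail
end

section
/- Fix λ > 0, an m×n matrix Z, an m×p matrix X with columns x₁,…,x_p, and let Ŝ ∈ ℝ^{p×k} globally minimize the convex function S ↦ ½‖Z − XS‖²_F + λ‖S‖_{2,1} over ℝ^{p×k}. If the i-th row ŝ_i of Ŝ is nonzero, then ‖x_i′(XŜ − Z)‖₂ = λ, where x_i′(XŜ − Z) ∈ ℝ^{1×k} is the i-th row of X′(XŜ − Z). -/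
open Matrix Finset Filter Topology

noncomputable section

/-!
Perturbing only the `i`-th row, `Ŝ ↦ Ŝ + t • eᵢ dᵀ`, changes the objective by
`t ⟪d, gᵢ⟫ + O(t²) + λ (‖ŝᵢ + t d‖ - ‖ŝᵢ‖)` with `g = X′(XŜ − Z)`, and minimality makes this
nonnegative for all small `t > 0`. The direction `d = -gᵢ` together with the triangle inequality
gives `‖gᵢ‖ ≤ λ`. Along `d = -ŝᵢ` the penalty drops by exactly `t λ ‖ŝᵢ‖`, which gives
`λ ‖ŝᵢ‖ ≤ -⟪ŝᵢ, gᵢ⟫ ≤ ‖ŝᵢ‖ ‖gᵢ‖`, and `ŝᵢ ≠ 0` lets us cancel `‖ŝᵢ‖`.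
-/

section NormRegularizedCritical

variable {E : Type*} [NormedAddCommGroup E] [InnerProductSpace ℝ E]

open RealInnerProductSpace

lemma nonneg_of_forall_mul_add_sq_mul_nonneg {a c : ℝ}
    (h : ∀ t : ℝ, 0 < t → t ≤ 1 → 0 ≤ t * a + t ^ 2 * c) : 0 ≤ a := by
  have hlim : Tendsto (fun t : ℝ => a + t * c) (𝓝[>] 0) (𝓝 a) := by
    have : Continuous fun t : ℝ => a + t * c := by fun_prop
    simpa using this.continuousWithinAt.tendsto (x := 0) (s := Set.Ioi 0)
  refine ge_of_tendsto hlim ?_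
  filter_upwards [Ioo_mem_nhdsGT (zero_lt_one' ℝ)] with t ⟨ht0, ht1⟩
  have := h t ht0 ht1.le
  nlinarith

theorem norm_eq_of_forall_perturb_nonneg {s g : E} {lam : ℝ} (hlam : 0 ≤ lam) (hs : s ≠ 0)
    (q : E → ℝ)
    (h : ∀ d : E, ∀ t : ℝ, 0 < t → t ≤ 1 →
      0 ≤ t * ⟪d, g⟫ + t ^ 2 * q d + lam * (‖s + t • d‖ - ‖s‖)) :
    ‖g‖ = lam := by
  have hle : ‖g‖ * ‖g‖ ≤ lam * ‖g‖ := by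
    have := nonneg_of_forall_mul_add_sq_mul_nonneg (a := -‖g‖ * ‖g‖ + lam * ‖g‖) (c := q (-g))
      fun t ht0 ht1 => by
        have hd := h (-g) t ht0 ht1
        have htri : ‖s + t • -g‖ ≤ ‖s‖ + t * ‖g‖ := by
          simpa [norm_smul, abs_of_pos ht0] using norm_add_le s (t • -g)
        rw [inner_neg_left, real_inner_self_eq_norm_mul_norm] at hd
        nlinarith [mul_le_mul_of_nonneg_left htri hlam]
    linarith
  have hge : lam * ‖s‖ ≤ ‖g‖ * ‖s‖ := by
    have := nonneg_of_forall_mul_add_sq_mul_nonneg (a := -⟪s, g⟫ - lam * ‖s‖) (c := q (-s))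
      fun t ht0 ht1 => by
        have hd := h (-s) t ht0 ht1
        have hshrink : ‖s + t • -s‖ = (1 - t) * ‖s‖ := by
          rw [show s + t • -s = (1 - t) • s by module, norm_smul,
            Real.norm_of_nonneg (by linarith)]
        rw [inner_neg_left, hshrink] at hd
        nlinarith
    linarith [neg_le_of_abs_le (abs_real_inner_le_norm s g)]
  have hs' : 0 < ‖s‖ := norm_pos_iff.mpr hs
  rcases (norm_nonneg g).eq_or_lt with hg | hg
  · nlinarith
  · exact le_antisymm (le_of_mul_le_mul_right hle hg) (le_of_mul_le_mul_right hge hs')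

end NormRegularizedCritical

lemma eNorm_eq_norm_toLp {n : ℕ} (v : Fin n → ℝ) : eNorm v = ‖WithLp.toLp 2 v‖ := by
  simp [eNorm, EuclideanSpace.norm_eq]

lemma frobSq_sub_smul {a b : ℕ} (R W : Matrix (Fin a) (Fin b) ℝ) (t : ℝ) :
    frobSq (R - t • W) = frobSq R - 2 * t * (∑ i, ∑ j, R i j * W i j) + t ^ 2 * frobSq W := by
  simp only [frobSq, Matrix.sub_apply, Matrix.smul_apply, smul_eq_mul, mul_sum, ← sum_sub_distrib,
    ← sum_add_distrib]
  exact sum_congr rfl fun a _ => sum_congr rfl fun b _ => by ring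

lemma sum_mul_mul_single {m p k : ℕ} (R : Matrix (Fin m) (Fin k) ℝ)
    (X : Matrix (Fin m) (Fin p) ℝ) (i : Fin p) (d : Fin k → ℝ) :
    ∑ a, ∑ b, R a b * (X * of (Pi.single i d)) a b = (Xᵀ * R) i ⬝ᵥ d := by
  simp only [mul_apply, of_apply, Pi.single_apply, ite_apply, Pi.zero_apply, mul_ite, mul_zero,
    sum_ite_eq', mem_univ, if_true, transpose_apply, dotProduct, sum_mul]
  rw [sum_comm]
  exact sum_congr rfl fun b _ => sum_congr rfl fun a _ => by ring

lemma frobSq_sub_mul_add_smul_single {m p k : ℕ} (Z : Matrix (Fin m) (Fin k) ℝ)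
    (X : Matrix (Fin m) (Fin p) ℝ) (S : Matrix (Fin p) (Fin k) ℝ) (i : Fin p)
    (d : Fin k → ℝ) (t : ℝ) :
    frobSq (Z - X * (S + t • of (Pi.single i d))) =
      frobSq (Z - X * S) + 2 * t * ((Xᵀ * (X * S - Z)) i ⬝ᵥ d) +
        t ^ 2 * frobSq (X * of (Pi.single i d)) := by
  have hcross : (Xᵀ * (Z - X * S)) i ⬝ᵥ d = -((Xᵀ * (X * S - Z)) i ⬝ᵥ d) := by
    rw [← neg_sub (X * S) Z, Matrix.mul_neg]
    exact neg_dotProduct _ _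
  rw [Matrix.mul_add, Matrix.mul_smul, ← sub_sub, frobSq_sub_smul, sum_mul_mul_single, hcross]
  ring

lemma norm21_add_single {p k : ℕ} (S : Matrix (Fin p) (Fin k) ℝ) (i : Fin p) (v : Fin k → ℝ) :
    norm21 (S + of (Pi.single i v)) = norm21 S + (eNorm (S i + v) - eNorm (S i)) := by
  rw [← sub_eq_iff_eq_add', norm21, norm21, ← sum_sub_distrib, sum_eq_single i]
  · congr 2
    ext b
    simp
  · intro j _ hj
    rw [show (S + of (Pi.single i v)) j = S j by ext b; simp [Pi.single_eq_of_ne hj], sub_self]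
  · simp

/-- KKT condition for the group lasso: at a global minimizer, every nonzero row `i` of `Ŝ`
satisfies `‖x_i′(XŜ − Z)‖₂ = λ`. -/
theorem stmt18 {m p k : ℕ} (lam : ℝ) (hlam : 0 < lam)
    (Z : Matrix (Fin m) (Fin k) ℝ) (X : Matrix (Fin m) (Fin p) ℝ)
    (Shat : Matrix (Fin p) (Fin k) ℝ)
    (hmin : ∀ S : Matrix (Fin p) (Fin k) ℝ,
      (1 / 2) * frobSq (Z - X * Shat) + lam * norm21 Shat ≤
        (1 / 2) * frobSq (Z - X * S) + lam * norm21 S) :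
    ∀ i : Fin p, Shat i ≠ 0 → eNorm ((Xᵀ * (X * Shat - Z) : Matrix (Fin p) (Fin k) ℝ) i) = lam := by
  intro i hi
  rw [eNorm_eq_norm_toLp]
  refine norm_eq_of_forall_perturb_nonneg hlam.le (s := WithLp.toLp 2 (Shat i))
    (by simpa using hi) (fun d => frobSq (X * of (Pi.single i (WithLp.ofLp d))) / 2)
    fun d t _ _ => ?_
  have h := hmin (Shat + t • of (Pi.single i (WithLp.ofLp d)))
  rw [frobSq_sub_mul_add_smul_single, smul_of, ← Pi.single_smul, norm21_add_single] at h
  rw [EuclideanSpace.inner_eq_star_dotProduct, star_trivial, ← WithLp.toLp_smul,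
    ← WithLp.toLp_add, ← eNorm_eq_norm_toLp, ← eNorm_eq_norm_toLp]
  linarith

end
end
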